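/- arXiv:1303.2827 — 3 statements merged into one kernel-verified Lean document; each statement's English description precedes it below -/
import Mathlib

section
/- The n×n stable spline (TC) kernel matrix Q with entries Q_{ij} = α^{max(i,j)}, for 0 < α < 1, is symmetric positive definite. -/
/-!
Factor `Q = D M Dᵀ` with `D = diag (α ^ (i + 1))` and `M i j = (α⁻¹) ^ (min i j + 1)`.
A min-kernel `g (min i j)` with `g` positive and strictly increasing is positive definite, being
`L C Lᵀ` for the lower-triangular all-ones matrix `L` (determinant `1`) and the diagonal `C` of
the positive increments of `g`.
-/

open Matrix Finset

def increments (g : ℕ → ℝ) : ℕ → ℝ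
  | 0 => g 0
  | k + 1 => g (k + 1) - g k

lemma sum_range_succ_increments (g : ℕ → ℝ) (m : ℕ) :
    ∑ k ∈ range (m + 1), increments g k = g m := by
  induction m with
  | zero => simp [increments]
  | succ m ih => rw [sum_range_succ, ih, increments]; ring

lemma increments_pos {g : ℕ → ℝ} (hg0 : 0 < g 0) (hg : StrictMono g) (k : ℕ) :
    0 < increments g k := by
  cases k with
  | zero => exact hg0
  | succ k => exact sub_pos.2 (hg k.lt_succ_self)

lemma sum_fin_ite_le_eq_sum_range {n m : ℕ} (hm : m < n) (f : ℕ → ℝ) :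
    ∑ k : Fin n, (if (k : ℕ) ≤ m then f k else 0) = ∑ k ∈ range (m + 1), f k := by
  rw [Fin.sum_univ_eq_sum_range (fun k => if k ≤ m then f k else 0), ← sum_filter]
  congr 1
  ext k
  simp only [mem_filter, mem_range]
  omega

def lowerOnes (n : ℕ) : Matrix (Fin n) (Fin n) ℝ :=
  of fun i k => if k ≤ i then 1 else 0

lemma det_lowerOnes (n : ℕ) : (lowerOnes n).det = 1 := by
  have hlower : (lowerOnes n).IsLowerTriangular := fun i j (hij : i < j) => if_neg hij.not_ge
  rw [det_of_isLowerTriangular _ hlower]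
  simp [lowerOnes]

lemma isUnit_lowerOnes (n : ℕ) : IsUnit (lowerOnes n) := by
  rw [isUnit_iff_isUnit_det, det_lowerOnes]
  exact isUnit_one

lemma lowerOnes_mul_diagonal_mul_conjTranspose (n : ℕ) (c : ℕ → ℝ) :
    lowerOnes n * diagonal (fun k : Fin n => c k) * (lowerOnes n)ᴴ =
      of fun i j : Fin n => ∑ k ∈ range (min (i : ℕ) j + 1), c k := by
  ext i j
  rw [of_apply, ← sum_fin_ite_le_eq_sum_range (min_lt_of_left_lt i.isLt), mul_apply]
  simp only [mul_diagonal, conjTranspose_apply, lowerOnes, of_apply, star_trivial]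
  refine sum_congr rfl fun k _ => ?_
  simp only [le_min_iff, Fin.le_iff_val_le_val]
  split_ifs <;> simp_all

theorem posDef_of_strictMono_comp_min {g : ℕ → ℝ} (hg0 : 0 < g 0) (hg : StrictMono g)
    (n : ℕ) :
    (of fun i j : Fin n => g (min (i : ℕ) j)).PosDef := by
  have hfactor : (of fun i j : Fin n => g (min (i : ℕ) j)) =
      lowerOnes n * diagonal (fun k : Fin n => increments g k) * (lowerOnes n)ᴴ := by
    simp only [lowerOnes_mul_diagonal_mul_conjTranspose, sum_range_succ_increments]
  rw [hfactor]
  have hC : (diagonal fun k : Fin n => increments g k).PosDef :=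
    posDef_diagonal_iff.2 fun k => increments_pos hg0 hg k
  exact hC.mul_mul_conjTranspose_same (vecMul_injective_iff_isUnit.2 (isUnit_lowerOnes n))

theorem posDef_pow_max_add_one {α : ℝ} (hα0 : 0 < α) (hα1 : α < 1) (n : ℕ) :
    (of fun i j : Fin n => α ^ (max (i : ℕ) j + 1)).PosDef := by
  set D : Matrix (Fin n) (Fin n) ℝ := diagonal fun i => α ^ ((i : ℕ) + 1)
  have hfactor : (of fun i j : Fin n => α ^ (max (i : ℕ) j + 1)) =
      D * (of fun i j : Fin n => α⁻¹ ^ (min (i : ℕ) j + 1)) * Dᴴ := by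
    ext i j
    simp only [D, diagonal_conjTranspose, mul_diagonal, diagonal_mul, of_apply, star_trivial]
    have hpow : α ^ ((i : ℕ) + 1) * α ^ ((j : ℕ) + 1) =
        α ^ (min (i : ℕ) j + 1) * α ^ (max (i : ℕ) j + 1) := by
      rw [← pow_add, ← pow_add]
      have := min_add_max (i : ℕ) j
      congr 1
      omega
    rw [mul_right_comm, hpow, mul_right_comm, ← mul_pow, mul_inv_cancel₀ hα0.ne', one_pow,
      one_mul]
  have hD : Function.Injective D.vecMul := vecMul_injective_iff_isUnit.2 <|
    isUnit_diagonal.2 <| Pi.isUnit_iff.2 fun i => (pow_pos hα0 _).ne'.isUnit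
  have hg : StrictMono fun k : ℕ => α⁻¹ ^ (k + 1) :=
    fun _ _ hab => pow_lt_pow_right₀ ((one_lt_inv₀ hα0).2 hα1) (by omega)
  rw [hfactor]
  exact (posDef_of_strictMono_comp_min (by positivity) hg n).mul_mul_conjTranspose_same hD

theorem stmt_9_general (n : ℕ) (α : ℝ) (hα0 : 0 < α) (hα1 : α < 1)
    (Q : Matrix (Fin n) (Fin n) ℝ)
    (hQ : ∀ i j, Q i j = α ^ (max i.1 j.1 + 1)) :
    Q.PosDef := by
  rw [show Q = of fun i j : Fin n => α ^ (max (i : ℕ) j + 1) from Matrix.ext hQ]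
  exact posDef_pow_max_add_one hα0 hα1 n

theorem stmt_9 (n : ℕ) (hn : 1 ≤ n) (α : ℝ) (hα0 : 0 < α) (hα1 : α < 1)
    (Q : Matrix (Fin n) (Fin n) ℝ)
    (hQ : ∀ i j, Q i j = α ^ (max i.1 j.1 + 1)) :
    Q.PosDef :=
  stmt_9_general n α hα0 hα1 Q hQ
end

section
/- For 0 ≤ α < 1, the n×n matrix Q with Q_{ij} = α^{max(i,j)} is positive semidefinite. -/
/-!
An antitone sequence `f` is, on `{0, …, n}`, the sum of its nonnegative decrements:
`f m = f n + ∑_{m ≤ k < n} (f k - f (k + 1))`. Hence `f (max i j)` is a nonnegative combination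
of the rank-one matrices `u uᵀ`, with `u` the all-ones vector or the indicator of `{i ≤ k}`,
and so is positive semidefinite. For `Q` take `f k = α ^ (k + 1)`.
-/

open Matrix Finset

def initialIndicator (n k : ℕ) : Fin n → ℝ := fun i => if (i : ℕ) ≤ k then 1 else 0

lemma eq_add_sum_Ico_sub_succ (f : ℕ → ℝ) {m n : ℕ} (hmn : m ≤ n) :
    f m = f n + ∑ k ∈ Ico m n, (f k - f (k + 1)) := by
  have htel := sum_Ico_sub f hmn
  have hneg : ∑ k ∈ Ico m n, (f k - f (k + 1)) = -∑ k ∈ Ico m n, (f (k + 1) - f k) := by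
    rw [← sum_neg_distrib]
    simp only [neg_sub]
  linarith

lemma sum_range_mul_initialIndicator (f : ℕ → ℝ) (n : ℕ) (i j : Fin n) :
    ∑ k ∈ range n, (f k - f (k + 1)) * (initialIndicator n k i * initialIndicator n k j) =
      ∑ k ∈ Ico (max (i : ℕ) j) n, (f k - f (k + 1)) := by
  have hfilter : (range n).filter (fun k => max (i : ℕ) j ≤ k) = Ico (max (i : ℕ) j) n := by
    ext k
    simp only [mem_filter, mem_range, mem_Ico]
    omega
  rw [← hfilter, sum_filter]
  refine sum_congr rfl fun k _ => ?_
  by_cases hi : (i : ℕ) ≤ k <;> by_cases hj : (j : ℕ) ≤ k <;>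
    simp [initialIndicator, hi, hj]

lemma of_apply_max_eq_sum_vecMulVec (f : ℕ → ℝ) (n : ℕ) :
    Matrix.of (fun i j : Fin n => f (max (i : ℕ) j)) =
      f n • vecMulVec 1 1 +
        ∑ k ∈ range n,
          (f k - f (k + 1)) • vecMulVec (initialIndicator n k) (initialIndicator n k) := by
  ext i j
  have hmax : max (i : ℕ) j ≤ n := max_le i.2.le j.2.le
  simp only [of_apply, Matrix.add_apply, Matrix.smul_apply, Matrix.sum_apply, vecMulVec_apply,
    Pi.one_apply, mul_one, smul_eq_mul]
  rw [sum_range_mul_initialIndicator, ← eq_add_sum_Ico_sub_succ f hmax]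

lemma posSemidef_vecMulVec_self {ι : Type*} [Finite ι] (u : ι → ℝ) : (vecMulVec u u).PosSemidef := by
  simpa using posSemidef_vecMulVec_self_star u

theorem posSemidef_of_apply_max {f : ℕ → ℝ} (hf : Antitone f) {n : ℕ} (hfn : 0 ≤ f n) :
    (Matrix.of fun i j : Fin n => f (max (i : ℕ) j)).PosSemidef := by
  rw [of_apply_max_eq_sum_vecMulVec]
  refine ((posSemidef_vecMulVec_self 1).smul hfn).add
    (posSemidef_sum _ fun k _ => (posSemidef_vecMulVec_self _).smul ?_)
  exact sub_nonneg.mpr (hf k.le_succ)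

theorem stmt_10_general (n : ℕ) (α : ℝ) (hα0 : 0 ≤ α) (hα1 : α < 1)
    (Q : Matrix (Fin n) (Fin n) ℝ)
    (hQ : ∀ i j, Q i j = α ^ (max i.1 j.1 + 1)) :
    Q.PosSemidef := by
  have hQ' : Q = Matrix.of fun i j : Fin n => α ^ (max (i : ℕ) j + 1) := Matrix.ext hQ
  rw [hQ']
  refine posSemidef_of_apply_max (f := fun k => α ^ (k + 1)) ?_ (by positivity)
  exact fun _ _ hkl => pow_le_pow_of_le_one hα0 hα1.le (by omega)

theorem stmt_10 (n : ℕ) (hn : 1 ≤ n) (α : ℝ) (hα0 : 0 ≤ α) (hα1 : α < 1)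
    (Q : Matrix (Fin n) (Fin n) ℝ)
    (hQ : ∀ i j, Q i j = α ^ (max i.1 j.1 + 1)) :
    Q.PosSemidef :=
  stmt_10_general n α hα0 hα1 Q hQ
end

section
/- For ρ_v, ρ_w PLQ functions with data (U_v, M_v, b_v, B_v) and (U_w, M_w, b_w, B_w), and γ > 0, the function y ↦ ρ_v(γ⁻¹(HLy − z)) + ρ_w(y) is itself a PLQ function with constraint set U_w × U_v, quadratic matrix blockdiag(M_w, M_v), affine map y ↦ (b_w + B_w y, b_v − γ⁻¹B_v z + γ⁻¹ B_v H L y). -/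
open Matrix

theorem stmt_15 (m n Kw Kv : ℕ)
    (Uw : Set (Fin Kw → ℝ)) (hUw : Uw.Nonempty) (hUwconv : Convex ℝ Uw)
    (Uv : Set (Fin Kv → ℝ)) (hUv : Uv.Nonempty) (hUvconv : Convex ℝ Uv)
    (Mw : Matrix (Fin Kw) (Fin Kw) ℝ) (hMw : Mw.PosSemidef)
    (Mv : Matrix (Fin Kv) (Fin Kv) ℝ) (hMv : Mv.PosSemidef)
    (bw : Fin Kw → ℝ) (Bw : Matrix (Fin Kw) (Fin n) ℝ)
    (bv : Fin Kv → ℝ) (Bv : Matrix (Fin Kv) (Fin m) ℝ)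
    (H : Matrix (Fin m) (Fin n) ℝ) (L : Matrix (Fin n) (Fin n) ℝ) (hL : IsUnit L.det)
    (z : Fin m → ℝ) (γ : ℝ) (hγ : 0 < γ)
    (ρw : (Fin n → ℝ) → ℝ) (ρv : (Fin m → ℝ) → ℝ)
    (hρw : ∀ y, ρw y =
      sSup {t : ℝ | ∃ u ∈ Uw, t = u ⬝ᵥ (bw + Bw.mulVec y) - (1 / 2) * (u ⬝ᵥ Mw.mulVec u)})
    (hρv : ∀ x, ρv x =
      sSup {t : ℝ | ∃ u ∈ Uv, t = u ⬝ᵥ (bv + Bv.mulVec x) - (1 / 2) * (u ⬝ᵥ Mv.mulVec u)})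
    (hbw : ∀ y, BddAbove
      {t : ℝ | ∃ u ∈ Uw, t = u ⬝ᵥ (bw + Bw.mulVec y) - (1 / 2) * (u ⬝ᵥ Mw.mulVec u)})
    (hbv : ∀ x, BddAbove
      {t : ℝ | ∃ u ∈ Uv, t = u ⬝ᵥ (bv + Bv.mulVec x) - (1 / 2) * (u ⬝ᵥ Mv.mulVec u)}) :
    ∀ y : Fin n → ℝ,
      ρv (γ⁻¹ • (H.mulVec (L.mulVec y) - z)) + ρw y =
        sSup {t : ℝ | ∃ u ∈ Uw ×ˢ Uv, t =
          u.1 ⬝ᵥ (bw + Bw.mulVec y) +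
          u.2 ⬝ᵥ ((bv - γ⁻¹ • Bv.mulVec z) + γ⁻¹ • Bv.mulVec ((H * L).mulVec y)) -
          (1 / 2) * (u.1 ⬝ᵥ Mw.mulVec u.1 + u.2 ⬝ᵥ Mv.mulVec u.2)} := by
  intro y
  set x : Fin m → ℝ := γ⁻¹ • (H.mulVec (L.mulVec y) - z) with hx
  have hkey : ∀ u : Fin Kv → ℝ,
      u ⬝ᵥ (bv + Bv.mulVec x) =
      u ⬝ᵥ ((bv - γ⁻¹ • Bv.mulVec z) + γ⁻¹ • Bv.mulVec ((H * L).mulVec y)) := by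
    intro u
    congr 1
    rw [hx, Matrix.mulVec_smul, Matrix.mulVec_sub, ← Matrix.mulVec_mulVec]
    module
  have hSv : Set.Nonempty
      {t : ℝ | ∃ u ∈ Uv, t = u ⬝ᵥ (bv + Bv.mulVec x) - (1 / 2) * (u ⬝ᵥ Mv.mulVec u)} := by
    obtain ⟨u, hu⟩ := hUv
    exact ⟨_, u, hu, rfl⟩
  have hSw : Set.Nonempty
      {t : ℝ | ∃ u ∈ Uw, t = u ⬝ᵥ (bw + Bw.mulVec y) - (1 / 2) * (u ⬝ᵥ Mw.mulVec u)} := by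
    obtain ⟨u, hu⟩ := hUw
    exact ⟨_, u, hu, rfl⟩
  rw [hρv, hρw, ← csSup_add hSv (hbv x) hSw (hbw y)]
  congr 1
  ext t
  constructor
  · rintro ⟨a, ⟨uv, huv, rfl⟩, b, ⟨uw, huw, rfl⟩, rfl⟩
    refine ⟨(uw, uv), ⟨huw, huv⟩, ?_⟩
    rw [← hkey]
    ring
  · rintro ⟨⟨uw, uv⟩, ⟨huw, huv⟩, rfl⟩
    refine ⟨_, ⟨uv, huv, rfl⟩, _, ⟨uw, huw, rfl⟩, ?_⟩
    rw [← hkey]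
    ring
end
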